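/- Let (P_n)_{n≥0} be the monic orthogonal polynomials for the truncated Hermite functional L[p] = ∫_{-z}^{z} p(x) e^{-x²} dx (z > 0 fixed), with three-term recurrence x P_n = P_{n+1} + γ_n P_{n-1} (P_{-1}=0, P_0=1) and norms h_n = L[P_n²]. Then for every n ≥ 1, P_n(z)·P_{n−1}(z)·e^{-z²} = (n/2 − γ_n)·h_{n−1}. -/

import Mathlib

/-!
Integration by parts gives `L[p' - 2 X p] = (p(z) - p(-z)) e^{-z²}` for every polynomial `p`.
Take `p = P_n P_{n-1}`, which is odd because the recurrence makes `P_k` have the parity of `k`,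
so the right side is `2 P_n(z) P_{n-1}(z) e^{-z²}`. On the left, orthogonality to lower degrees
kills everything in `L[p']` except the leading term `n P_{n-1}` of `P_n'`, so `L[p'] = n h_{n-1}`,
and the recurrence gives `L[X p] = γ_n h_{n-1}`.
-/

open Polynomial

/-- The truncated Hermite linear functional `L[p] = ∫_{-z}^{z} p(x) e^{-x²} dx`. -/
noncomputable def truncL (z : ℝ) (p : Polynomial ℝ) : ℝ :=
  ∫ x in (-z)..z, p.eval x * Real.exp (-x ^ 2)

namespace Polynomial

variable {R : Type*} [CommRing R] (L : R[X] →ₗ[R] R) {P : ℕ → R[X]}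

theorem apply_mul_eq_zero_of_degree_lt (hmonic : ∀ n, (P n).Monic)
    (hdeg : ∀ n, (P n).natDegree = n) (horth : ∀ m n, m ≠ n → L (P m * P n) = 0)
    {n : ℕ} {q : R[X]} (hq : q.degree < n) : L (P n * q) = 0 := by
  nontriviality R
  let S : Sequence R := ⟨P, fun i => by rw [degree_eq_natDegree (hmonic i).ne_zero, hdeg]⟩
  have hspan : q ∈ Submodule.span R (S '' Set.Iio n) := by
    rw [S.span_degreeLT fun i _ => by simp [S, (hmonic i).leadingCoeff]]
    exact mem_degreeLT.mpr hq
  suffices Submodule.span R (S '' Set.Iio n) ≤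
      LinearMap.ker (L ∘ₗ LinearMap.mulLeft R (P n)) from this hspan
  rw [Submodule.span_le]
  rintro _ ⟨k, hk, rfl⟩
  exact horth n k (ne_of_gt hk)

theorem degree_derivative_sub_C_mul_lt {p q : R[X]} {n : ℕ} (hp : p.Monic)
    (hpdeg : p.natDegree = n + 1) (hq : q.Monic) (hqdeg : q.natDegree = n) :
    (derivative p - C ((n : R) + 1) * q).degree < n := by
  rw [degree_lt_iff_coeff_zero]
  intro m hm
  rw [coeff_sub, coeff_derivative, coeff_C_mul]
  rcases hm.eq_or_lt with rfl | hlt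
  · rw [← hpdeg, ← hqdeg, coeff_natDegree, coeff_natDegree, hp.leadingCoeff, hq.leadingCoeff]
    ring
  · rw [coeff_eq_zero_of_natDegree_lt (by omega), coeff_eq_zero_of_natDegree_lt (by omega)]
    ring

theorem apply_derivative_mul_eq (hmonic : ∀ n, (P n).Monic)
    (hdeg : ∀ n, (P n).natDegree = n) (horth : ∀ m n, m ≠ n → L (P m * P n) = 0) (n : ℕ) :
    L (derivative (P (n + 1) * P n)) = ((n : R) + 1) * L (P n * P n) := by
  have hlow : L (P n * (derivative (P (n + 1)) - C ((n : R) + 1) * P n)) = 0 :=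
    apply_mul_eq_zero_of_degree_lt L hmonic hdeg horth
      (degree_derivative_sub_C_mul_lt (hmonic _) (hdeg _) (hmonic _) (hdeg _))
  have hder : L (P (n + 1) * derivative (P n)) = 0 := by
    refine apply_mul_eq_zero_of_degree_lt L hmonic hdeg horth ?_
    calc (derivative (P n)).degree ≤ n := degree_le_of_natDegree_le
          ((natDegree_derivative_le _).trans (by rw [hdeg]; omega))
      _ < (n + 1 : ℕ) := by exact_mod_cast n.lt_succ_self
  rw [mul_sub, map_sub, sub_eq_zero] at hlow
  rw [derivative_mul, map_add, mul_comm (derivative _), hder, add_zero, hlow, mul_left_comm,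
    ← smul_eq_C_mul, map_smul, smul_eq_mul]

theorem apply_X_mul_mul_eq {γ : ℕ → R} (horth : ∀ m n, m ≠ n → L (P m * P n) = 0)
    (hrec : ∀ n, X * P (n + 1) = P (n + 2) + C (γ (n + 1)) * P n) (n : ℕ) :
    L (X * (P (n + 1) * P n)) = γ (n + 1) * L (P n * P n) := by
  rw [← mul_assoc, hrec, add_mul, map_add, horth _ _ (by omega), zero_add, mul_assoc,
    ← smul_eq_C_mul, map_smul, smul_eq_mul]

theorem eval_neg_of_recurrence {γ : ℕ → R} (hP0 : P 0 = 1) (hP1 : P 1 = X)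
    (hrec : ∀ n, X * P (n + 1) = P (n + 2) + C (γ (n + 1)) * P n) (x : R) (n : ℕ) :
    (P n).eval (-x) = (-1) ^ n * (P n).eval x := by
  induction n using Nat.twoStepInduction with
  | zero => simp [hP0]
  | one => simp [hP1]
  | more n ih₀ ih₁ =>
    have hrec_eval (y : R) :
        (P (n + 2)).eval y = y * (P (n + 1)).eval y - γ (n + 1) * (P n).eval y := by
      have := congrArg (eval y) (hrec n)
      simp only [eval_mul, eval_add, eval_X, eval_C] at this
      rw [this]; ring
    rw [hrec_eval, hrec_eval, ih₀, ih₁]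
    ring

end Polynomial

theorem intervalIntegrable_eval_mul_exp_neg_sq (p : ℝ[X]) (a b : ℝ) :
    IntervalIntegrable (fun x => p.eval x * Real.exp (-x ^ 2)) MeasureTheory.volume a b :=
  (p.continuous.mul (by fun_prop)).intervalIntegrable a b

noncomputable def truncLinear (z : ℝ) : ℝ[X] →ₗ[ℝ] ℝ where
  toFun := truncL z
  map_add' p q := by
    simp only [truncL, eval_add, add_mul]
    exact intervalIntegral.integral_add (intervalIntegrable_eval_mul_exp_neg_sq p _ _)
      (intervalIntegrable_eval_mul_exp_neg_sq q _ _)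
  map_smul' a p := by
    show truncL z (a • p) = a * truncL z p
    simp only [truncL, eval_smul, smul_eq_mul, mul_assoc, intervalIntegral.integral_const_mul]

theorem truncLinear_apply (z : ℝ) (p : ℝ[X]) : truncLinear z p = truncL z p := rfl

theorem hasDerivAt_eval_mul_exp_neg_sq (p : ℝ[X]) (x : ℝ) :
    HasDerivAt (fun y => p.eval y * Real.exp (-y ^ 2))
      ((derivative p - C 2 * (X * p)).eval x * Real.exp (-x ^ 2)) x := by
  have hexp : HasDerivAt (fun y : ℝ => Real.exp (-y ^ 2)) (Real.exp (-x ^ 2) * -(2 * x)) x := by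
    simpa using ((hasDerivAt_pow 2 x).neg).exp
  refine ((p.hasDerivAt x).fun_mul hexp).congr_deriv ?_
  simp only [eval_sub, eval_mul, eval_C, eval_X]
  ring

theorem truncL_derivative_sub_two_X_mul (z : ℝ) (p : ℝ[X]) :
    truncL z (derivative p - C 2 * (X * p)) = (p.eval z - p.eval (-z)) * Real.exp (-z ^ 2) := by
  rw [truncL, intervalIntegral.integral_eq_sub_of_hasDerivAt
    (fun x _ => hasDerivAt_eval_mul_exp_neg_sq p x)
    (intervalIntegrable_eval_mul_exp_neg_sq _ _ _), neg_sq]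
  ring

theorem truncated_hermite_boundary_identity_general (z : ℝ)
    (P : ℕ → Polynomial ℝ) (γ h : ℕ → ℝ)
    (hmonic : ∀ n, (P n).Monic) (hdeg : ∀ n, (P n).natDegree = n)
    (horth : ∀ m n, m ≠ n → truncL z (P m * P n) = 0)
    (hP0 : P 0 = 1) (hP1 : P 1 = X)
    (hrec : ∀ n, X * P (n + 1) = P (n + 2) + C (γ (n + 1)) * P n)
    (hh : ∀ n, h n = truncL z (P n * P n)) :
    ∀ n : ℕ, 1 ≤ n →
      (P n).eval z * (P (n - 1)).eval z * Real.exp (-z ^ 2) =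
        ((n : ℝ) / 2 - γ n) * h (n - 1) := by
  intro n hn
  obtain ⟨m, rfl⟩ : ∃ m, n = m + 1 := ⟨n - 1, by omega⟩
  have hboundary := truncL_derivative_sub_two_X_mul z (P (m + 1) * P m)
  rw [← truncLinear_apply, map_sub, apply_derivative_mul_eq _ hmonic hdeg horth,
    ← smul_eq_C_mul, map_smul, smul_eq_mul, apply_X_mul_mul_eq _ horth hrec, truncLinear_apply,
    eval_mul, eval_mul, eval_neg_of_recurrence hP0 hP1 hrec,
    eval_neg_of_recurrence hP0 hP1 hrec] at hboundary
  have hsign : (-1 : ℝ) ^ (m + 1) * (-1) ^ m = -1 := by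
    rw [← pow_add, Odd.neg_one_pow ⟨m, by ring⟩]
  rw [Nat.add_sub_cancel, hh]
  push_cast
  linear_combination (-1 / 2 : ℝ) * hboundary
    + (1 / 2) * (P (m + 1)).eval z * (P m).eval z * Real.exp (-z ^ 2) * hsign

theorem truncated_hermite_boundary_identity (z : ℝ) (hz : 0 < z)
    (P : ℕ → Polynomial ℝ) (γ h : ℕ → ℝ)
    (hmonic : ∀ n, (P n).Monic) (hdeg : ∀ n, (P n).natDegree = n)
    (horth : ∀ m n, m ≠ n → truncL z (P m * P n) = 0)
    (hP0 : P 0 = 1) (hP1 : P 1 = X)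
    (hrec : ∀ n, X * P (n + 1) = P (n + 2) + C (γ (n + 1)) * P n)
    (hh : ∀ n, h n = truncL z (P n * P n)) :
    ∀ n : ℕ, 1 ≤ n →
      (P n).eval z * (P (n - 1)).eval z * Real.exp (-z ^ 2) =
        ((n : ℝ) / 2 - γ n) * h (n - 1) :=
  truncated_hermite_boundary_identity_general z P γ h hmonic hdeg horth hP0 hP1 hrec hh
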